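/- arXiv:2511.12646 — 2 statements merged into one kernel-verified Lean document; each statement's English description precedes it below -/
import Mathlib

section
/- Let G be a simple graph in which a, b are closed twins. If θ is a second-order stationary point of the Kuramoto energy E_G(θ), then θ_a ≡ θ_b (mod 2π), i.e., the phasors of a and b coincide. -/
/-!
Write `δ = θ a - θ b` and `s = sin (δ / 2)`. Testing the Hessian against `e_a - e_b` gives
`0 ≤ H a a + H b b + 2 cos δ`. Since `a` and `b` have the same neighbours apart from each other,
the combination `cos (δ / 2) • (eq_a - eq_b)` of the equilibrium equations, plus `s • (H a a + H b b)`,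
collapses term by term, giving `s * (H a a + H b b) = -2 s`. Multiplying the Hessian inequality by
`s ^ 2` and using `cos δ = 1 - 2 s ^ 2` yields `0 ≤ -4 s ^ 4`, so `s = 0` and the phasors agree.
-/

open Real Classical

noncomputable section

/-- Real-valued adjacency indicator of a simple graph. -/
def adjW {V : Type*} (G : SimpleGraph V) (i j : V) : ℝ := if G.Adj i j then 1 else 0

/-- The phasor (unit vector in the plane) associated with an angle. -/
def phasor (t : ℝ) : ℝ × ℝ := (Real.cos t, Real.sin t)

/-- The Kuramoto energy. -/
def kEnergy {V : Type*} [Fintype V] (G : SimpleGraph V) (θ : V → ℝ) : ℝ :=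
  (1 / 2) * ∑ i, ∑ j, adjW G i j * (1 - Real.cos (θ i - θ j))

/-- The Hessian of the Kuramoto energy. -/
def kHess {V : Type*} [Fintype V] (G : SimpleGraph V) (θ : V → ℝ) : Matrix V V ℝ :=
  fun i j =>
    if i = j then ∑ k, adjW G i k * Real.cos (θ i - θ k)
    else -(adjW G i j * Real.cos (θ i - θ j))

/-- First-order (equilibrium) condition of the homogeneous Kuramoto model. -/
def IsEquilibrium {V : Type*} [Fintype V] (G : SimpleGraph V) (θ : V → ℝ) : Prop :=
  ∀ i, ∑ j, adjW G i j * Real.sin (θ j - θ i) = 0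

/-- Second-order stationary point of the Kuramoto energy. -/
def IsSOSP {V : Type*} [Fintype V] (G : SimpleGraph V) (θ : V → ℝ) : Prop :=
  IsEquilibrium G θ ∧ (kHess G θ).PosSemidef

open Matrix in
theorem Matrix.PosSemidef.diag_add_diag_sub_nonneg {ι R : Type*} [Fintype ι] [DecidableEq ι]
    [CommRing R] [PartialOrder R] [StarRing R] [TrivialStar R] {M : Matrix ι ι R}
    (hM : M.PosSemidef) (a b : ι) : 0 ≤ M a a + M b b - M a b - M b a := by
  have := hM.dotProduct_mulVec_nonneg (Pi.single a 1 - Pi.single b 1)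
  simp only [star_trivial, mulVec_sub, mulVec_single_one, sub_dotProduct, dotProduct_sub,
    single_dotProduct, one_mul, col_apply] at this
  exact this.trans_eq (by ring)

theorem Real.cos_half_sub_mul_sin_sub_sin_add_sin_half_sub_mul_cos_add_cos (x y z : ℝ) :
    cos ((x - y) / 2) * (sin (z - x) - sin (z - y))
      + sin ((x - y) / 2) * (cos (x - z) + cos (y - z)) = 0 := by
  rw [sin_sub_sin, cos_add_cos, show (z - x - (z - y)) / 2 = -((x - y) / 2) by ring,
    show (x - z + (y - z)) / 2 = -((z - x + (z - y)) / 2) by ring,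
    show (x - z - (y - z)) / 2 = (x - y) / 2 by ring, sin_neg, cos_neg]
  ring

theorem phasor_eq_of_sin_half_sub_eq_zero {x y : ℝ} (h : sin ((x - y) / 2) = 0) :
    phasor x = phasor y := by
  have hx : x = y + 2 * ((x - y) / 2) := by ring
  rw [hx]
  simp [phasor, cos_add, sin_add, cos_two_mul_eq_one_sub, sin_two_mul, h]

namespace SimpleGraph

variable {V : Type*} {G : SimpleGraph V} {a b : V}

theorem adj_of_insert_neighborSet_eq (hab : a ≠ b)
    (htwin : insert a (G.neighborSet a) = insert b (G.neighborSet b)) : G.Adj a b :=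
  (htwin ▸ Set.mem_insert b _ : b ∈ insert a (G.neighborSet a)).resolve_left hab.symm

theorem adj_iff_of_insert_neighborSet_eq
    (htwin : insert a (G.neighborSet a) = insert b (G.neighborSet b)) {k : V}
    (hka : k ≠ a) (hkb : k ≠ b) : G.Adj a k ↔ G.Adj b k := by
  simpa [hka, hkb] using Set.ext_iff.mp htwin k

end SimpleGraph

section Kuramoto

variable {V : Type*} [Fintype V] {G : SimpleGraph V} {θ : V → ℝ}

theorem kHess_apply_self (i : V) :
    kHess G θ i i = ∑ k, adjW G i k * cos (θ i - θ k) := by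
  simp [kHess]

theorem kHess_apply_of_adj {i j : V} (h : G.Adj i j) : kHess G θ i j = -cos (θ i - θ j) := by
  simp [kHess, adjW, h, h.ne]

theorem sin_half_sub_mul_kHess_add_kHess_of_closed_twins (heq : IsEquilibrium G θ) {a b : V}
    (hab : a ≠ b) (htwin : insert a (G.neighborSet a) = insert b (G.neighborSet b)) :
    sin ((θ a - θ b) / 2) * (kHess G θ a a + kHess G θ b b) = -2 * sin ((θ a - θ b) / 2) := by
  have hadj := G.adj_of_insert_neighborSet_eq hab htwin
  have hhalf : sin ((θ a - θ b) / 2) = cos ((θ a - θ b) / 2) * sin (θ a - θ b)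
      - sin ((θ a - θ b) / 2) * cos (θ a - θ b) := by
    conv_lhs => rw [show (θ a - θ b) / 2 = θ a - θ b - (θ a - θ b) / 2 by ring, sin_sub]
    ring
  set s := sin ((θ a - θ b) / 2)
  set c := cos ((θ a - θ b) / 2)
  have hcos : cos (θ b - θ a) = cos (θ a - θ b) := by rw [← cos_neg, neg_sub]
  have hsin : sin (θ b - θ a) = -sin (θ a - θ b) := by rw [← sin_neg, neg_sub]
  -- A common neighbour contributes nothing, by the half-angle identity; `a` and `b` contribute
  -- `-s` each.
  have hterm : ∀ k, c * (adjW G a k * sin (θ k - θ a) - adjW G b k * sin (θ k - θ b))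
      + s * (adjW G a k * cos (θ a - θ k) + adjW G b k * cos (θ b - θ k))
      = (if k = a then -s else 0) + (if k = b then -s else 0) := by
    intro k
    obtain rfl | hka := eq_or_ne k a
    · simp [adjW, hadj.symm, hab, hcos]
      linear_combination hhalf
    obtain rfl | hkb := eq_or_ne k b
    · simp [adjW, hadj, hka, hsin]
      linear_combination hhalf
    · have hba : adjW G b k = adjW G a k := by
        simp [adjW, G.adj_iff_of_insert_neighborSet_eq htwin hka hkb]
      rw [hba, if_neg hka, if_neg hkb]
      linear_combination adjW G a k *
        cos_half_sub_mul_sin_sub_sin_add_sin_half_sub_mul_cos_add_cos (θ a) (θ b) (θ k)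
  have hsum := Fintype.sum_congr _ _ hterm
  simp only [Finset.sum_add_distrib, Finset.sum_sub_distrib, ← Finset.mul_sum,
    Finset.sum_ite_eq', Finset.mem_univ, if_true] at hsum
  rw [kHess_apply_self, kHess_apply_self]
  linear_combination hsum - c * heq a + c * heq b

end Kuramoto

theorem closed_twins_sync_at_sosp
    {n : ℕ} (G : SimpleGraph (Fin n)) (θ : Fin n → ℝ)
    (a b : Fin n) (hab : a ≠ b)
    (htwin : insert a (G.neighborSet a) = insert b (G.neighborSet b))
    (hsosp : IsSOSP G θ) :
    phasor (θ a) = phasor (θ b) := by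
  obtain ⟨heq, hpsd⟩ := hsosp
  have hadj := G.adj_of_insert_neighborSet_eq hab htwin
  have hform : 0 ≤ kHess G θ a a + kHess G θ b b + 2 * cos (θ a - θ b) := by
    have h := hpsd.diag_add_diag_sub_nonneg a b
    rw [kHess_apply_of_adj hadj, kHess_apply_of_adj hadj.symm, ← cos_neg (θ b - θ a),
      neg_sub] at h
    linarith
  have hkey := sin_half_sub_mul_kHess_add_kHess_of_closed_twins heq hab htwin
  set s := sin ((θ a - θ b) / 2)
  have hcos : cos (θ a - θ b) = 1 - 2 * s ^ 2 := by
    rw [← cos_two_mul_eq_one_sub, mul_div_cancel₀ _ two_ne_zero]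
  have hs4 : 0 ≤ -4 * s ^ 4 :=
    calc 0 ≤ s ^ 2 * (kHess G θ a a + kHess G θ b b + 2 * cos (θ a - θ b)) :=
          mul_nonneg (sq_nonneg s) hform
      _ = -4 * s ^ 4 := by rw [hcos]; linear_combination s * hkey
  exact phasor_eq_of_sin_half_sub_eq_zero (pow_eq_zero_iff four_ne_zero |>.mp
    (le_antisymm (by linarith) (by positivity)))

end
end

section
/- In any connected threshold graph G, every second-order stationary point θ of the Kuramoto energy E_G is a synchronous state: (cos θ_i, sin θ_i) = (cos θ_j, sin θ_j) for all vertices i, j. -/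
open Real Classical

noncomputable section

/-- The threshold graph on `Fin n` generated by the bit sequence `b`:
vertices are added in order `0, 1, …, n-1`, and vertex `i ≥ 1` is adjacent to all
earlier vertices iff `b i = true` (dominating) and to none iff `b i = false`
(isolated).  Hence two distinct vertices are adjacent iff the later one is
dominating.  (The bit `b 0` of the initial vertex is irrelevant.) -/
def thresholdGraph (n : ℕ) (b : Fin n → Bool) : SimpleGraph (Fin n) where
  Adj u v := u ≠ v ∧ b (max u v) = true
  symm := by
    constructor
    intro u v h
    exact ⟨h.1.symm, by rw [max_comm]; exact h.2⟩
  loopless := by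
    constructor
    intro u h
    exact h.1 rfl

/-! Write `z j = exp (θ j * I)`. The equilibrium equations read `∑ j, A i j • z j = c i • z i`,
where `c i ≥ 0` is the diagonal entry of the Hessian; testing the Hessian against the indicator
of a vertex set `S` shows that the cut `∑ i ∈ S, ∑ j ∉ S, A i j * cos (θ i - θ j)` is nonnegative.
In a connected threshold graph the last vertex `w` is dominating, and `z k = z w` follows by
downward induction on `k`: once all later vertices agree with `w`, the equation at `w` gives
`∑ j ≤ k, z j = s • z w` for a real `s`, the cut `{j ≤ k}` forces `s ≥ 0`, and the equation at
`k` becomes `p • z k = q • z w` with `0 ≤ p` and `0 < q`; both phasors being unit vectors,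
`z k = z w`. -/

open Complex Finset

theorem eq_of_smul_eq_smul_of_norm_eq_one {E : Type*} [NormedAddCommGroup E] [NormedSpace ℝ E]
    {p q : ℝ} {x y : E} (hp : 0 ≤ p) (hq : 0 < q) (hx : ‖x‖ = 1) (hy : ‖y‖ = 1)
    (h : p • x = q • y) : x = y := by
  have hpq : p = q := by
    simpa [norm_smul, hx, hy, abs_of_nonneg hp, abs_of_pos hq] using congrArg norm h
  subst hpq
  exact smul_right_injective E hq.ne' h

theorem Finset.sum_Iic_add_sum_Ioi {α M : Type*} [Fintype α] [LinearOrder α]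
    [LocallyFiniteOrderBot α] [LocallyFiniteOrderTop α] [AddCommMonoid M] (k : α) (f : α → M) :
    ∑ j ∈ Iic k, f j + ∑ j ∈ Ioi k, f j = ∑ j, f j := by
  rw [← sum_union (disjoint_left.mpr fun j hj hj' => (mem_Iic.mp hj).not_gt (mem_Ioi.mp hj'))]
  exact sum_congr (by ext j; simp [le_or_gt]) fun _ _ => rfl

theorem phasor_eq_phasor_iff {s t : ℝ} : phasor s = phasor t ↔ cexp (s * I) = cexp (t * I) := by
  simp [phasor, Complex.ext_iff, exp_ofReal_mul_I_re, exp_ofReal_mul_I_im]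

theorem cos_sub_eq_of_exp_eq {s t t' : ℝ} (h : cexp (t * I) = cexp (t' * I)) :
    Real.cos (s - t) = Real.cos (s - t') := by
  have h' := phasor_eq_phasor_iff.mpr h
  simp only [phasor, Prod.mk.injEq] at h'
  rw [Real.cos_sub, Real.cos_sub, h'.1, h'.2]

theorem sum_cos_sub_eq_of_sum_exp_eq {ι : Type*} (S : Finset ι) (θ : ι → ℝ) {s t : ℝ}
    (h : ∑ i ∈ S, cexp (θ i * I) = s • cexp (t * I)) : ∑ i ∈ S, Real.cos (θ i - t) = s := by
  have hcos : ∀ i, Real.cos (θ i - t) = (cexp (θ i * I) * cexp (-t * I)).re := by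
    intro i
    rw [← Complex.exp_add, ← exp_ofReal_mul_I_re]
    push_cast
    ring_nf
  simp_rw [hcos, ← re_sum, ← sum_mul, h, real_smul, mul_assoc, ← Complex.exp_add]
  simp

theorem adjW_self {V : Type*} (G : SimpleGraph V) (i : V) : adjW G i i = 0 := by
  simp [adjW]

section Kuramoto

variable {V : Type*} [Fintype V] {G : SimpleGraph V} {θ : V → ℝ}

theorem kHess_apply (G : SimpleGraph V) (θ : V → ℝ) (i j : V) :
    kHess G θ i j = (if i = j then ∑ k, adjW G i k * Real.cos (θ i - θ k) else 0)
      - adjW G i j * Real.cos (θ i - θ j) := by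
  by_cases h : i = j
  · subst h
    simp [kHess, adjW_self]
  · simp [kHess, h]

theorem sum_kHess_row_eq_zero (G : SimpleGraph V) (θ : V → ℝ) (i : V) :
    ∑ j, kHess G θ i j = 0 := by
  simp [kHess_apply, sum_sub_distrib]

theorem kHess_cut_nonneg [DecidableEq V] (h : (kHess G θ).PosSemidef) (S : Finset V) :
    0 ≤ ∑ i ∈ S, ∑ j ∈ Sᶜ, adjW G i j * Real.cos (θ i - θ j) := by
  have hrow : ∀ i ∈ S,
      ∑ j ∈ S, kHess G θ i j = ∑ j ∈ Sᶜ, adjW G i j * Real.cos (θ i - θ j) := by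
    intro i hi
    rw [eq_neg_of_add_eq_zero_left ((sum_add_sum_compl S _).trans (sum_kHess_row_eq_zero G θ i)),
      ← sum_neg_distrib]
    refine sum_congr rfl fun j hj => ?_
    have hij : i ≠ j := by
      rintro rfl
      exact mem_compl.mp hj hi
    simp [kHess, hij]
  calc 0 ≤ ∑ i ∈ S, ∑ j ∈ S, kHess G θ i j := by
        simpa [dotProduct, Matrix.mulVec] using
          h.dotProduct_mulVec_nonneg fun j => if j ∈ S then 1 else 0
    _ = _ := sum_congr rfl hrow

theorem IsEquilibrium.sum_adjW_smul_exp (h : IsEquilibrium G θ) (i : V) :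
    ∑ j, adjW G i j • cexp (θ j * I) = kHess G θ i i • cexp (θ i * I) := by
  have hrel : ∑ j, adjW G i j • cexp ((θ j - θ i : ℝ) * I) = kHess G θ i i := by
    apply Complex.ext
    · simp only [re_sum, smul_re, exp_ofReal_mul_I_re, kHess, if_true, ofReal_re]
      simp [← Real.cos_neg (θ _ - θ i), neg_sub]
    · simp only [im_sum, smul_im, exp_ofReal_mul_I_im, ofReal_im]
      exact h i
  calc ∑ j, adjW G i j • cexp (θ j * I)
      = (∑ j, adjW G i j • cexp ((θ j - θ i : ℝ) * I)) * cexp (θ i * I) := by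
        rw [sum_mul]
        refine sum_congr rfl fun j _ => ?_
        rw [smul_mul_assoc, ← Complex.exp_add]
        push_cast
        ring_nf
    _ = _ := by rw [hrel, real_smul]

end Kuramoto

section Threshold

variable {n : ℕ} {b : Fin n → Bool}

theorem adjW_thresholdGraph_of_lt {i j : Fin n} (h : i < j) :
    adjW (thresholdGraph n b) i j = if b j then 1 else 0 := by
  simp [adjW, thresholdGraph, h.ne, max_eq_right h.le]

theorem adjW_thresholdGraph_of_gt {i j : Fin n} (h : j < i) :
    adjW (thresholdGraph n b) i j = if b i then 1 else 0 := by
  simp [adjW, thresholdGraph, h.ne', max_eq_left h.le]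

variable {M : Type*} [AddCommGroup M] [Module ℝ M]

theorem sum_Ioi_adjW_thresholdGraph_smul {i k : Fin n} (hik : i ≤ k) (f : Fin n → M) :
    ∑ j ∈ Ioi k, adjW (thresholdGraph n b) i j • f j = ∑ j ∈ Ioi k with b j, f j := by
  rw [sum_filter]
  refine sum_congr rfl fun j hj => ?_
  rw [adjW_thresholdGraph_of_lt (hik.trans_lt (mem_Ioi.mp hj))]
  split_ifs <;> simp

theorem sum_adjW_thresholdGraph_smul (k : Fin n) (f : Fin n → M) :
    ∑ j, adjW (thresholdGraph n b) k j • f j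
      = (if b k then ∑ j ∈ Iio k, f j else 0) + ∑ j ∈ Ioi k with b j, f j := by
  rw [← sum_Iic_add_sum_Ioi k, sum_Ioi_adjW_thresholdGraph_smul le_rfl, Iic_eq_cons_Iio,
    sum_cons, adjW_self, zero_smul, zero_add]
  congr 1
  split_ifs with hk
  · refine sum_congr rfl fun j hj => ?_
    rw [adjW_thresholdGraph_of_gt (mem_Iio.mp hj), if_pos hk, one_smul]
  · refine sum_eq_zero fun j hj => ?_
    rw [adjW_thresholdGraph_of_gt (mem_Iio.mp hj), if_neg hk, zero_smul]

end Threshold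

section Synchronization

variable {m : ℕ} {b : Fin (m + 1) → Bool} {θ : Fin (m + 1) → ℝ}

theorem SimpleGraph.Connected.thresholdGraph_last_eq_true
    (h : (thresholdGraph (m + 1) b).Connected) {i : Fin (m + 1)} (hi : i ≠ Fin.last m) :
    b (Fin.last m) = true := by
  obtain ⟨p⟩ := h.preconnected (Fin.last m) i
  simpa [thresholdGraph, max_eq_left (Fin.le_last _)] using
    (p.adj_snd (SimpleGraph.Walk.not_nil_of_ne hi.symm)).2

theorem card_filter_Ioi_pos (hb : b (Fin.last m) = true) {k : Fin (m + 1)}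
    (hk : k < Fin.last m) : (0 : ℝ) < #{j ∈ Ioi k | b j} :=
  Nat.cast_pos.mpr (card_pos.mpr ⟨_, mem_filter.mpr ⟨mem_Ioi.mpr hk, hb⟩⟩)

theorem IsEquilibrium.sum_exp_thresholdGraph (hb : b (Fin.last m) = true)
    (h : IsEquilibrium (thresholdGraph (m + 1) b) θ) :
    ∑ j, cexp (θ j * I) = (kHess (thresholdGraph (m + 1) b) θ (Fin.last m) (Fin.last m) + 1) •
      cexp (θ (Fin.last m) * I) := by
  have hIoi : Ioi (Fin.last m) = ∅ := by
    ext j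
    simpa using Fin.le_last j
  have hw := h.sum_adjW_smul_exp (Fin.last m)
  rw [sum_adjW_thresholdGraph_smul, if_pos hb, hIoi, filter_empty, sum_empty, add_zero] at hw
  rw [← sum_Iic_add_sum_Ioi (Fin.last m), Iic_eq_cons_Iio, sum_cons, hw, hIoi, sum_empty,
    add_zero, add_smul, one_smul, add_comm]

theorem IsEquilibrium.sum_Iic_exp_thresholdGraph (hb : b (Fin.last m) = true)
    (h : IsEquilibrium (thresholdGraph (m + 1) b) θ) {k : Fin (m + 1)}
    (ih : ∀ j, k < j → cexp (θ j * I) = cexp (θ (Fin.last m) * I)) :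
    ∑ j ∈ Iic k, cexp (θ j * I) =
      (kHess (thresholdGraph (m + 1) b) θ (Fin.last m) (Fin.last m) + 1 - #(Ioi k)) •
        cexp (θ (Fin.last m) * I) := by
  have htot := sum_Iic_add_sum_Ioi k fun j => cexp (θ j * I)
  rw [sum_congr rfl fun j hj => ih j (mem_Ioi.mp hj), sum_const,
    h.sum_exp_thresholdGraph hb] at htot
  rw [eq_sub_of_add_eq htot, sub_smul, ← Nat.cast_smul_eq_nsmul ℝ]

theorem IsSOSP.kHess_last_add_one_sub_card_Ioi_nonneg (hb : b (Fin.last m) = true)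
    (h : IsSOSP (thresholdGraph (m + 1) b) θ) {k : Fin (m + 1)} (hk : k < Fin.last m)
    (ih : ∀ j, k < j → cexp (θ j * I) = cexp (θ (Fin.last m) * I)) :
    0 ≤ kHess (thresholdGraph (m + 1) b) θ (Fin.last m) (Fin.last m) + 1 - #(Ioi k) := by
  have hrow : ∀ i ∈ Iic k,
      ∑ j ∈ (Iic k)ᶜ, adjW (thresholdGraph (m + 1) b) i j * Real.cos (θ i - θ j)
        = #{j ∈ Ioi k | b j} * Real.cos (θ i - θ (Fin.last m)) := by
    intro i hi
    have hcompl : (Iic k)ᶜ = Ioi k := by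
      ext
      simp
    have hsplit := sum_Ioi_adjW_thresholdGraph_smul (b := b) (mem_Iic.mp hi)
      fun j => Real.cos (θ i - θ j)
    simp only [smul_eq_mul] at hsplit
    rw [hcompl, hsplit, sum_congr rfl fun j hj =>
        cos_sub_eq_of_exp_eq (ih j (mem_Ioi.mp (mem_filter.mp hj).1)),
      sum_const, nsmul_eq_mul]
  have hcut := kHess_cut_nonneg h.2 (Iic k)
  rw [sum_congr rfl hrow, ← mul_sum,
    sum_cos_sub_eq_of_sum_exp_eq _ _ (h.1.sum_Iic_exp_thresholdGraph hb ih)] at hcut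
  exact nonneg_of_mul_nonneg_right hcut (card_filter_Ioi_pos hb hk)

theorem IsSOSP.exp_eq_last_thresholdGraph_of_lt (hb : b (Fin.last m) = true)
    (h : IsSOSP (thresholdGraph (m + 1) b) θ) {k : Fin (m + 1)} (hk : k < Fin.last m)
    (ih : ∀ j, k < j → cexp (θ j * I) = cexp (θ (Fin.last m) * I)) :
    cexp (θ k * I) = cexp (θ (Fin.last m) * I) := by
  set H := kHess (thresholdGraph (m + 1) b) θ
  set s : ℝ := H (Fin.last m) (Fin.last m) + 1 - ((#(Ioi k) : ℕ) : ℝ)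
  set D : ℝ := ((#{j ∈ Ioi k | b j} : ℕ) : ℝ) with hD_def
  have hD : 0 < D := card_filter_Ioi_pos hb hk
  have hs : 0 ≤ s := h.kHess_last_add_one_sub_card_Ioi_nonneg hb hk ih
  have hnorm : ∀ t : ℝ, ‖cexp (t * I)‖ = 1 := norm_exp_ofReal_mul_I
  have heq := h.1.sum_adjW_smul_exp k
  rw [sum_adjW_thresholdGraph_smul,
    sum_congr rfl fun j hj => ih j (mem_Ioi.mp (mem_filter.mp hj).1),
    sum_const, ← Nat.cast_smul_eq_nsmul ℝ, ← hD_def] at heq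
  cases hbk : b k
  · rw [if_neg (by simp [hbk]), zero_add] at heq
    exact eq_of_smul_eq_smul_of_norm_eq_one h.2.diag_nonneg hD (hnorm _) (hnorm _) heq.symm
  · have hIio : ∑ j ∈ Iio k, cexp (θ j * I) = s • cexp (θ (Fin.last m) * I) - cexp (θ k * I) := by
      rw [← h.1.sum_Iic_exp_thresholdGraph hb ih, Iic_eq_cons_Iio, sum_cons, add_sub_cancel_left]
    rw [if_pos hbk, hIio] at heq
    refine eq_of_smul_eq_smul_of_norm_eq_one (p := H k k + 1) (q := s + D)
      (by linarith [h.2.diag_nonneg (i := k)]) (by linarith) (hnorm _) (hnorm _) ?_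
    rw [add_smul, one_smul, add_smul, ← heq]
    abel

theorem IsSOSP.exp_eq_last_thresholdGraph (hb : b (Fin.last m) = true)
    (h : IsSOSP (thresholdGraph (m + 1) b) θ) (k : Fin (m + 1)) :
    cexp (θ k * I) = cexp (θ (Fin.last m) * I) := by
  induction k using WellFoundedGT.induction with
  | _ k ih =>
    rcases (Fin.le_last k).lt_or_eq with hk | rfl
    · exact h.exp_eq_last_thresholdGraph_of_lt hb hk ih
    · rfl

end Synchronization

theorem connected_threshold_graph_sosp_synchronous
    (n : ℕ) (b : Fin n → Bool)
    (hconn : (thresholdGraph n b).Connected)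
    (θ : Fin n → ℝ) (hsosp : IsSOSP (thresholdGraph n b) θ) :
    ∀ i j, phasor (θ i) = phasor (θ j) := by
  obtain _ | m := n
  · exact fun i => i.elim0
  suffices h : ∀ k, phasor (θ k) = phasor (θ (Fin.last m)) from
    fun i j => (h i).trans (h j).symm
  intro k
  rcases eq_or_ne k (Fin.last m) with rfl | hk
  · rfl
  · exact phasor_eq_phasor_iff.mpr
      (hsosp.exp_eq_last_thresholdGraph (hconn.thresholdGraph_last_eq_true hk) k)
end
end
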